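/- For every fixed substitution probability q with 0 < q < 1/8, the sequence P_α(n,q) converges as n → ∞ to the limit (1/2)·(1 − 2q/(1−2q) + √((1−8q)(1−4q))/(1−2q)²). -/

import Mathlib

/-!
Model: rooted binary phylogenetic trees whose edges carry substitution
probabilities, evolving binary characters (states `true` = α, `false` = β)
under the two-state symmetric (Neyman) model, and Fitch's maximum parsimony
algorithm.
-/

/-- A rooted binary tree; an internal node records the substitution
probabilities on the edges to its two children. -/
inductive PTree where
  | leaf : PTree
  | node (p₁ p₂ : ℝ) (t₁ t₂ : PTree) : PTree

/-- The type of binary characters on a tree: an assignment of a state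
(`true` = α, `false` = β) to each leaf. -/
def PTree.Char : PTree → Type
  | .leaf => Bool
  | .node _ _ t₁ t₂ => t₁.Char × t₂.Char

instance PTree.Char.instFintype : (t : PTree) → Fintype t.Char
  | .leaf => inferInstanceAs (Fintype Bool)
  | .node _ _ t₁ t₂ =>
      letI := PTree.Char.instFintype t₁
      letI := PTree.Char.instFintype t₂
      inferInstanceAs (Fintype (_ × _))

instance PTree.Char.instDecidableEq : (t : PTree) → DecidableEq t.Char
  | .leaf => inferInstanceAs (DecidableEq Bool)
  | .node _ _ t₁ t₂ =>
      letI := PTree.Char.instDecidableEq t₁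
      letI := PTree.Char.instDecidableEq t₂
      inferInstanceAs (DecidableEq (_ × _))

/-- Single-edge transition probability of the two-state symmetric model:
conditional on the parent being in state `s`, the child is in state `s'`
with probability `1 - p` if `s' = s` and `p` otherwise. -/
def transProb (p : ℝ) (s s' : Bool) : ℝ := if s' = s then 1 - p else p

/-- `t.charProb s c` is the probability that the character `c` is generated
at the leaves of `t` conditional on the root of `t` being in state `s`
(substitutions happen independently across edges). -/
def PTree.charProb : (t : PTree) → Bool → t.Char → ℝ
  | .leaf, s, c => if (show Bool from c) = s then 1 else 0
  | .node p₁ p₂ t₁ t₂, s, c =>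
      (∑ s₁ : Bool, transProb p₁ s s₁ * t₁.charProb s₁ c.1) *
      (∑ s₂ : Bool, transProb p₂ s s₂ * t₂.charProb s₂ c.2)

/-- The state set assigned to the root by Fitch's maximum parsimony
algorithm: a leaf in state `s` gets `{s}`; an internal node gets the
intersection of the children's state sets if nonempty, else their union. -/
def PTree.fitch : (t : PTree) → t.Char → Finset Bool
  | .leaf, c => {c}
  | .node _ _ t₁ t₂, c =>
      if (t₁.fitch c.1 ∩ t₂.fitch c.2).Nonempty then t₁.fitch c.1 ∩ t₂.fitch c.2
      else t₁.fitch c.1 ∪ t₂.fitch c.2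

/-- `P_α`: probability, conditional on the root being in state α, that MP
returns the state set `{α}`. -/
noncomputable def PTree.probAlpha (t : PTree) : ℝ :=
  ∑ c : t.Char, if t.fitch c = {true} then t.charProb true c else 0

/-- `P_β`: probability, conditional on the root being in state α, that MP
returns the state set `{β}`. -/
noncomputable def PTree.probBeta (t : PTree) : ℝ :=
  ∑ c : t.Char, if t.fitch c = {false} then t.charProb true c else 0

/-- `P_{αβ}`: probability, conditional on the root being in state α, that MP
returns the state set `{α, β}`. -/
noncomputable def PTree.probBoth (t : PTree) : ℝ :=
  ∑ c : t.Char, if t.fitch c = ({true, false} : Finset Bool) then t.charProb true c else 0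

/-- The reconstruction accuracy `RA = UA + AA/2` of maximum parsimony on all
leaves of `t`, the conditioning root state being the root of `t` itself. -/
noncomputable def PTree.RA (t : PTree) : ℝ := t.probAlpha + t.probBoth / 2

/-- Probability of the character `c` on `t` conditional on the state `s` of an
ancestor vertex joined to the root of `t` by an edge of substitution
probability `p`. -/
noncomputable def PTree.charProbVia (t : PTree) (p : ℝ) (s : Bool) (c : t.Char) : ℝ :=
  ∑ s' : Bool, transProb p s s' * t.charProb s' c

/-- Reconstruction accuracy of MP applied to the subtree `t` (rooted at `y`),
where the ancestral state being estimated is that of a vertex `ρ` joined to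
`y` by an edge of substitution probability `p`:
`RA = P(MP = {α} | ρ = α) + (1/2)·P(MP = {α,β} | ρ = α)`. -/
noncomputable def PTree.RAVia (t : PTree) (p : ℝ) : ℝ :=
  (∑ c : t.Char, if t.fitch c = {true} then t.charProbVia p true c else 0) +
  (∑ c : t.Char, if t.fitch c = ({true, false} : Finset Bool) then t.charProbVia p true c else 0) / 2

/-- All edge substitution probabilities lie in `[0, 1/2]`. -/
def PTree.valid : PTree → Prop
  | .leaf => True
  | .node p₁ p₂ t₁ t₂ => 0 ≤ p₁ ∧ p₁ ≤ 1/2 ∧ 0 ≤ p₂ ∧ p₂ ≤ 1/2 ∧ t₁.valid ∧ t₂.valid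

/-- The list of net substitution probabilities from the root to each leaf
(obtained by chaining the single-edge substitution probabilities). -/
def PTree.leafFlipProbs : PTree → List ℝ
  | .leaf => [0]
  | .node p₁ p₂ t₁ t₂ =>
      (t₁.leafFlipProbs.map fun r => (1 - p₁) * r + p₁ * (1 - r)) ++
      (t₂.leafFlipProbs.map fun r => (1 - p₂) * r + p₂ * (1 - r))

/-- The balanced binary tree of depth `n` with substitution probability `q`
on every edge. -/
def balanced (q : ℝ) : ℕ → PTree
  | 0 => .leaf
  | n + 1 => .node q q (balanced q n) (balanced q n)

/-- `P_α(n,q)` for the balanced tree of depth `n`. -/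
noncomputable def Palpha (n : ℕ) (q : ℝ) : ℝ := (balanced q n).probAlpha

/-- `P_β(n,q)` for the balanced tree of depth `n`. -/
noncomputable def Pbeta (n : ℕ) (q : ℝ) : ℝ := (balanced q n).probBeta

/-- `P_{αβ}(n,q)` for the balanced tree of depth `n`. -/
noncomputable def Palphabeta (n : ℕ) (q : ℝ) : ℝ := (balanced q n).probBoth

/-!
Write `a, b, c` for `P_α, P_β, P_{αβ}` at depth `n`. Fitch's rule at the root, together with the
symmetry of the model under exchanging `α` and `β`, gives a quadratic recursion for `(a, b, c)`.
Since `a + b + c = 1`, it becomes, for the gap `d = a - b`,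
`d' = (1 - 2q)(1 + c) d` and `c' = c² + ((1 - c)² - (1 - 2q)² d²) / 2`.
With `s = 2q / (1 - 2q)`, an induction shows `c ≤ s` and `(1 - 2q)² d² ≥ 3c² - 2c + 1 - 2s`.
Hence `d` decreases to a limit `δ ≥ √((1 - 8q)(1 - 4q)) / (1 - 2q)² > 0`, so
`c = d' / ((1 - 2q) d) - 1 → s`, and the recursion for `c` in the limit forces equality in the bound
on `δ`. Finally `a = (1 + d - c) / 2`.
-/

open Finset Filter Topology

def fitchCombine (A B : Finset Bool) : Finset Bool :=
  if (A ∩ B).Nonempty then A ∩ B else A ∪ B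

lemma fitchCombine_image_not (A B : Finset Bool) :
    fitchCombine (A.image not) (B.image not) = (fitchCombine A B).image not := by
  revert A B; decide

lemma sum_finset_bool {M : Type*} [AddCommMonoid M] (f : Finset Bool → M) :
    ∑ A, f A = f ∅ + f {true} + f {false} + f {true, false} := by
  rw [show (univ : Finset (Finset Bool)) = {∅, {true}, {false}, {true, false}} by decide,
    sum_insert (by decide), sum_insert (by decide), sum_insert (by decide), sum_singleton,
    add_assoc, add_assoc]

namespace PTree

lemma fitch_node (p₁ p₂ : ℝ) (t₁ t₂ : PTree) (c : (node p₁ p₂ t₁ t₂).Char) :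
    (node p₁ p₂ t₁ t₂).fitch c = fitchCombine (t₁.fitch c.1) (t₂.fitch c.2) := rfl

lemma fitch_nonempty : (t : PTree) → (c : t.Char) → (t.fitch c).Nonempty
  | .leaf, c => singleton_nonempty (α := Bool) c
  | .node _ _ t₁ _, c => by
      rw [fitch_node, fitchCombine]
      split_ifs with h
      · exact h
      · exact (fitch_nonempty t₁ c.1).mono subset_union_left

def flipChar : (t : PTree) → t.Char → t.Char
  | .leaf, c => !(show Bool from c)
  | .node _ _ t₁ t₂, c => (t₁.flipChar c.1, t₂.flipChar c.2)

lemma flipChar_involutive : (t : PTree) → Function.Involutive t.flipChar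
  | .leaf, c => Bool.not_not (show Bool from c)
  | .node _ _ t₁ t₂, c => Prod.ext (flipChar_involutive t₁ c.1) (flipChar_involutive t₂ c.2)

lemma fitch_flipChar : (t : PTree) → (c : t.Char) → t.fitch (t.flipChar c) = (t.fitch c).image not
  | .leaf, c => (image_singleton (f := not) (show Bool from c)).symm
  | .node _ _ t₁ t₂, c => by
      rw [fitch_node, fitch_node, ← fitchCombine_image_not, ← fitch_flipChar t₁, ← fitch_flipChar t₂]
      rfl

lemma sum_transProb_not_mul (p : ℝ) (s : Bool) (f : Bool → ℝ) :
    ∑ s' : Bool, transProb p (!s) s' * f s' = ∑ s' : Bool, transProb p s s' * f (!s') := by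
  cases s <;> simp [transProb, add_comm]

lemma charProb_flipChar : (t : PTree) → (s : Bool) → (c : t.Char) →
    t.charProb (!s) (t.flipChar c) = t.charProb s c
  | .leaf, s, c => by
      revert c
      change ∀ c : Bool, _
      intro c
      cases c <;> cases s <;> simp [charProb, flipChar]
  | .node p₁ p₂ t₁ t₂, s, c => by
      simp only [charProb, flipChar, sum_transProb_not_mul, charProb_flipChar t₁,
        charProb_flipChar t₂]

noncomputable def fitchDist (t : PTree) (s : Bool) (S : Finset Bool) : ℝ :=
  ∑ c : t.Char, if t.fitch c = S then t.charProb s c else 0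

noncomputable def fitchDistVia (t : PTree) (p : ℝ) (s : Bool) (S : Finset Bool) : ℝ :=
  ∑ c : t.Char, if t.fitch c = S then t.charProbVia p s c else 0

lemma fitchDist_not (t : PTree) (s : Bool) (S : Finset Bool) :
    t.fitchDist (!s) (S.image not) = t.fitchDist s S := by
  unfold fitchDist
  rw [← Equiv.sum_comp (flipChar_involutive t).toPerm]
  refine sum_congr rfl fun c _ => ?_
  simp only [Function.Involutive.coe_toPerm, fitch_flipChar, charProb_flipChar,
    (image_injective Bool.not_injective).eq_iff]

lemma charProbVia_eq (t : PTree) (p : ℝ) (s : Bool) (c : t.Char) :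
    t.charProbVia p s c = (1 - p) * t.charProb s c + p * t.charProb (!s) c := by
  cases s <;> simp [charProbVia, transProb, add_comm]

lemma fitchDistVia_eq (t : PTree) (p : ℝ) (s : Bool) (S : Finset Bool) :
    t.fitchDistVia p s S = (1 - p) * t.fitchDist s S + p * t.fitchDist (!s) S := by
  simp only [fitchDistVia, fitchDist, charProbVia_eq, mul_sum, ← sum_add_distrib]
  refine sum_congr rfl fun c _ => ?_
  split_ifs <;> simp

lemma fitchDist_leaf (s : Bool) (S : Finset Bool) :
    leaf.fitchDist s S = if S = {s} then 1 else 0 := by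
  change ∑ c : Bool, (if ({c} : Finset Bool) = S then (if c = s then (1 : ℝ) else 0) else 0) = _
  rw [Fintype.sum_eq_single s fun c hc => by simp [hc]]
  simp [eq_comm]

lemma fitchDist_empty (t : PTree) (s : Bool) : t.fitchDist s ∅ = 0 :=
  sum_eq_zero fun c _ => if_neg (t.fitch_nonempty c).ne_empty

lemma fitchDistVia_empty (t : PTree) (p : ℝ) (s : Bool) : t.fitchDistVia p s ∅ = 0 := by
  simp [fitchDistVia_eq, fitchDist_empty]

lemma sum_char_node {M : Type*} [AddCommMonoid M] (p₁ p₂ : ℝ) (t₁ t₂ : PTree)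
    (f : (node p₁ p₂ t₁ t₂).Char → M) :
    ∑ c, f c = ∑ c₁ : t₁.Char, ∑ c₂ : t₂.Char, f (c₁, c₂) :=
  Fintype.sum_prod_type (α₁ := t₁.Char) (α₂ := t₂.Char) f

lemma fitchDist_node (p₁ p₂ : ℝ) (t₁ t₂ : PTree) (s : Bool) (S : Finset Bool) :
    (node p₁ p₂ t₁ t₂).fitchDist s S = ∑ A : Finset Bool, ∑ B : Finset Bool,
      if fitchCombine A B = S then t₁.fitchDistVia p₁ s A * t₂.fitchDistVia p₂ s B else 0 := by
  rw [fitchDist, sum_char_node]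
  simp only [fitchDistVia, sum_mul_sum, ite_sum_zero]
  -- move the sums over characters outside; the pair `(c₁, c₂)` then only contributes to
  -- `A = t₁.fitch c₁` and `B = t₂.fitch c₂`
  conv_rhs => enter [2, A]; rw [sum_comm]
  conv_rhs => rw [sum_comm]
  refine sum_congr rfl fun c₁ _ => ?_
  conv_rhs => enter [2, A]; rw [sum_comm]
  conv_rhs => rw [sum_comm]
  refine sum_congr rfl fun c₂ _ => ?_
  rw [Fintype.sum_eq_single (t₁.fitch c₁) fun A hA => sum_eq_zero fun B _ => by simp [Ne.symm hA],
    Fintype.sum_eq_single (t₂.fitch c₂) fun B hB => by simp [Ne.symm hB]]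
  simp only [if_true]
  rfl

section Node

variable (p₁ p₂ : ℝ) (t₁ t₂ : PTree) (s : Bool)

lemma fitchDist_node_true : (node p₁ p₂ t₁ t₂).fitchDist s {true} =
    t₁.fitchDistVia p₁ s {true} * t₂.fitchDistVia p₂ s {true} +
    t₁.fitchDistVia p₁ s {true} * t₂.fitchDistVia p₂ s {true, false} +
    t₁.fitchDistVia p₁ s {true, false} * t₂.fitchDistVia p₂ s {true} := by
  simp only [fitchDist_node, sum_finset_bool, fitchDistVia_empty]
  simp +decide

lemma fitchDist_node_false : (node p₁ p₂ t₁ t₂).fitchDist s {false} =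
    t₁.fitchDistVia p₁ s {false} * t₂.fitchDistVia p₂ s {false} +
    t₁.fitchDistVia p₁ s {false} * t₂.fitchDistVia p₂ s {true, false} +
    t₁.fitchDistVia p₁ s {true, false} * t₂.fitchDistVia p₂ s {false} := by
  simp only [fitchDist_node, sum_finset_bool, fitchDistVia_empty]
  simp +decide

lemma fitchDist_node_true_false : (node p₁ p₂ t₁ t₂).fitchDist s {true, false} =
    t₁.fitchDistVia p₁ s {true} * t₂.fitchDistVia p₂ s {false} +
    t₁.fitchDistVia p₁ s {false} * t₂.fitchDistVia p₂ s {true} +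
    t₁.fitchDistVia p₁ s {true, false} * t₂.fitchDistVia p₂ s {true, false} := by
  simp only [fitchDist_node, sum_finset_bool, fitchDistVia_empty]
  simp +decide

end Node

end PTree

section Balanced

variable (q : ℝ) (n : ℕ)

lemma Palpha_eq_fitchDist : Palpha n q = (balanced q n).fitchDist true {true} := rfl

lemma Pbeta_eq_fitchDist : Pbeta n q = (balanced q n).fitchDist true {false} := rfl

lemma Palphabeta_eq_fitchDist :
    Palphabeta n q = (balanced q n).fitchDist true {true, false} := rfl

lemma Palpha_zero : Palpha 0 q = 1 := by
  simp [Palpha_eq_fitchDist, balanced, PTree.fitchDist_leaf]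

lemma Pbeta_zero : Pbeta 0 q = 0 := by
  simp [Pbeta_eq_fitchDist, balanced, PTree.fitchDist_leaf]

lemma Palphabeta_zero : Palphabeta 0 q = 0 := by
  simp +decide [Palphabeta_eq_fitchDist, balanced, PTree.fitchDist_leaf]

lemma fitchDistVia_balanced_true :
    (balanced q n).fitchDistVia q true {true} = (1 - q) * Palpha n q + q * Pbeta n q := by
  have h := (balanced q n).fitchDist_not true {false}
  simp only [image_singleton, Bool.not_false, Bool.not_true] at h
  rw [PTree.fitchDistVia_eq, Bool.not_true, h, Palpha_eq_fitchDist, Pbeta_eq_fitchDist]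

lemma fitchDistVia_balanced_false :
    (balanced q n).fitchDistVia q true {false} = (1 - q) * Pbeta n q + q * Palpha n q := by
  have h := (balanced q n).fitchDist_not true {true}
  simp only [image_singleton, Bool.not_true] at h
  rw [PTree.fitchDistVia_eq, Bool.not_true, h, Palpha_eq_fitchDist, Pbeta_eq_fitchDist]

lemma fitchDistVia_balanced_true_false :
    (balanced q n).fitchDistVia q true {true, false} = Palphabeta n q := by
  have h := (balanced q n).fitchDist_not true {true, false}
  simp only [image_insert, image_singleton, Bool.not_true, Bool.not_false, pair_comm] at h
  rw [PTree.fitchDistVia_eq, Bool.not_true, h, ← add_mul, sub_add_cancel, one_mul,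
    Palphabeta_eq_fitchDist]

lemma Palpha_succ : Palpha (n + 1) q =
    ((1 - q) * Palpha n q + q * Pbeta n q) ^ 2 +
      2 * ((1 - q) * Palpha n q + q * Pbeta n q) * Palphabeta n q := by
  rw [Palpha_eq_fitchDist, balanced, PTree.fitchDist_node_true,
    fitchDistVia_balanced_true, fitchDistVia_balanced_true_false]
  ring

lemma Pbeta_succ : Pbeta (n + 1) q =
    ((1 - q) * Pbeta n q + q * Palpha n q) ^ 2 +
      2 * ((1 - q) * Pbeta n q + q * Palpha n q) * Palphabeta n q := by
  rw [Pbeta_eq_fitchDist, balanced, PTree.fitchDist_node_false,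
    fitchDistVia_balanced_false, fitchDistVia_balanced_true_false]
  ring

lemma Palphabeta_succ : Palphabeta (n + 1) q = Palphabeta n q ^ 2 +
    2 * ((1 - q) * Palpha n q + q * Pbeta n q) * ((1 - q) * Pbeta n q + q * Palpha n q) := by
  rw [Palphabeta_eq_fitchDist, balanced, PTree.fitchDist_node_true_false,
    fitchDistVia_balanced_true, fitchDistVia_balanced_false, fitchDistVia_balanced_true_false]
  ring

end Balanced

lemma quadratic_nonneg_of_endpoints {a b c x y z : ℝ} (ha : a ≤ 0)
    (hx : 0 ≤ a * x ^ 2 + b * x + c) (hy : 0 ≤ a * y ^ 2 + b * y + c) (hxz : x ≤ z) (hzy : z ≤ y) :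
    0 ≤ a * z ^ 2 + b * z + c := by
  rcases hxz.eq_or_lt with rfl | hxz
  · exact hx
  have key : (y - x) * (a * z ^ 2 + b * z + c) = (y - z) * (a * x ^ 2 + b * x + c) +
      (z - x) * (a * y ^ 2 + b * y + c) - a * (z - x) * (y - z) * (y - x) := by ring
  have : 0 ≤ (y - x) * (a * z ^ 2 + b * z + c) := by
    rw [key]
    have := mul_nonneg (mul_nonneg (mul_nonneg (neg_nonneg.2 ha) (sub_nonneg.2 hxz.le))
      (sub_nonneg.2 hzy)) (sub_nonneg.2 (hxz.le.trans hzy))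
    nlinarith [mul_nonneg (sub_nonneg.2 hzy) hx, mul_nonneg (sub_nonneg.2 hxz.le) hy]
  exact (mul_nonneg_iff_of_pos_left (by linarith)).1 this

-- For `s = 2q / (1 - 2q)`, the bound `fitchBound s c ≤ (1 - 2q)² d²` says exactly that the next
-- value of `c` is at most `s`.
def fitchBound (s c : ℝ) : ℝ := 3 * c ^ 2 - 2 * c + 1 - 2 * s

lemma one_add_sq_mul_fitchBound_self_le (s c : ℝ) (hc : 0 ≤ c) (hcs : c ≤ s) (hs : s ≤ 1 / 3) :
    (1 + s) ^ 2 * fitchBound s s ≤ (1 + c) ^ 2 * fitchBound s c := by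
  -- `t ↦ (1 + t)² fitchBound s t` has derivative `4 (1 + t) (3t² - s) ≤ 0` on `[0, s]`
  unfold fitchBound
  nlinarith [mul_nonneg (mul_nonneg (sub_nonneg.2 hcs) (hc.trans hcs)) (sub_nonneg.2 hs),
    mul_nonneg (mul_nonneg (sub_nonneg.2 hcs) (sub_nonneg.2 hcs)) (hc.trans hcs),
    mul_nonneg (mul_nonneg (sub_nonneg.2 hcs) (sub_nonneg.2 hcs)) hc,
    pow_nonneg (sub_nonneg.2 hcs) 4]

lemma one_add_sq_mul_fitchBound_half_le (s c : ℝ) (hc : 0 ≤ c) (hcs : c ≤ s) (hs : s ≤ 1 / 3) :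
    (1 + s) ^ 2 * fitchBound s ((3 * c ^ 2 - 2 * c) / 2) ≤ (1 + c) ^ 2 := by
  set K := fitchBound s ((3 * c ^ 2 - 2 * c) / 2) + 2 * s with hK
  have hK_le : K ≤ 1 + 2 * c := by
    have : K - 1 - 2 * c = 9 / 4 * c ^ 3 * (3 * c - 4) := by rw [hK, fitchBound]; ring
    nlinarith [pow_nonneg hc 3]
  calc (1 + s) ^ 2 * fitchBound s ((3 * c ^ 2 - 2 * c) / 2) = (1 + s) ^ 2 * (K - 2 * s) := by
        rw [hK]; ring
    -- `t ↦ (1 + t)² (K - 2t)` is decreasing on `[c, s]` because `K ≤ 1 + 2c`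
    _ ≤ (1 + c) ^ 2 * (K - 2 * c) := by
        nlinarith [mul_nonneg (sub_nonneg.2 hcs) (sub_nonneg.2 hK_le),
          mul_nonneg (sub_nonneg.2 hcs) (sub_nonneg.2 hcs), mul_nonneg (sub_nonneg.2 hcs) hc]
    _ ≤ (1 + c) ^ 2 := by nlinarith [sq_nonneg (1 + c)]

lemma fitchBound_step (s c D : ℝ) (hc : 0 ≤ c) (hcs : c ≤ s) (hs : s ≤ 1 / 3)
    (hD₀ : fitchBound s c ≤ D) (hD₁ : D ≤ 1) :
    (1 + s) ^ 2 * fitchBound s (c ^ 2 + ((1 - c) ^ 2 - D) / 2) ≤ (1 + c) ^ 2 * D := by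
  -- the difference of the two sides is a concave quadratic in `D`, nonnegative at both ends
  set P := c ^ 2 + (1 - c) ^ 2 / 2
  have hφ : ∀ m, (1 + c) ^ 2 * m - (1 + s) ^ 2 * fitchBound s (c ^ 2 + ((1 - c) ^ 2 - m) / 2) =
      -(3 / 4 * (1 + s) ^ 2) * m ^ 2 + ((1 + c) ^ 2 - (1 + s) ^ 2 * (1 - 3 * P)) * m +
        -((1 + s) ^ 2 * (3 * P ^ 2 - 2 * P + 1 - 2 * s)) := fun m => by
    simp only [fitchBound, P]; ring
  have h_left : c ^ 2 + ((1 - c) ^ 2 - fitchBound s c) / 2 = s := by rw [fitchBound]; ring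
  have h_right : c ^ 2 + ((1 - c) ^ 2 - 1) / 2 = (3 * c ^ 2 - 2 * c) / 2 := by ring
  have hx : (1 + s) ^ 2 * fitchBound s (c ^ 2 + ((1 - c) ^ 2 - fitchBound s c) / 2) ≤
      (1 + c) ^ 2 * fitchBound s c := by
    rw [h_left]; exact one_add_sq_mul_fitchBound_self_le s c hc hcs hs
  have hy : (1 + s) ^ 2 * fitchBound s (c ^ 2 + ((1 - c) ^ 2 - 1) / 2) ≤ (1 + c) ^ 2 * 1 := by
    rw [h_right, mul_one]; exact one_add_sq_mul_fitchBound_half_le s c hc hcs hs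
  have := quadratic_nonneg_of_endpoints (a := -(3 / 4 * (1 + s) ^ 2))
    (b := (1 + c) ^ 2 - (1 + s) ^ 2 * (1 - 3 * P))
    (c := -((1 + s) ^ 2 * (3 * P ^ 2 - 2 * P + 1 - 2 * s))) (neg_nonpos.2 (by positivity))
    (by rw [← hφ]; linarith) (by rw [← hφ]; linarith) hD₀ hD₁
  linarith [hφ D]

section Asymptotics

variable (q : ℝ)

lemma Palpha_add_Pbeta_add_Palphabeta (n : ℕ) : Palpha n q + Pbeta n q + Palphabeta n q = 1 := by
  induction n with
  | zero => rw [Palpha_zero, Pbeta_zero, Palphabeta_zero]; norm_num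
  | succ n ih =>
    rw [Palpha_succ, Pbeta_succ, Palphabeta_succ]
    linear_combination (Palpha n q + Pbeta n q + Palphabeta n q + 1) * ih

lemma Palpha_sub_Pbeta_succ (n : ℕ) : Palpha (n + 1) q - Pbeta (n + 1) q =
    (1 - 2 * q) * (1 + Palphabeta n q) * (Palpha n q - Pbeta n q) := by
  rw [Palpha_succ, Pbeta_succ]
  linear_combination (1 - 2 * q) * (Palpha n q - Pbeta n q) * Palpha_add_Pbeta_add_Palphabeta q n

lemma Palphabeta_succ_eq (n : ℕ) : Palphabeta (n + 1) q = Palphabeta n q ^ 2 +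
    ((1 - Palphabeta n q) ^ 2 - (1 - 2 * q) ^ 2 * (Palpha n q - Pbeta n q) ^ 2) / 2 := by
  rw [Palphabeta_succ]
  linear_combination (Palpha n q + Pbeta n q + 1 - Palphabeta n q) / 2 *
    Palpha_add_Pbeta_add_Palphabeta q n

variable {q}

lemma one_sub_two_mul_mul_one_add_div (hq : q ≠ 1 / 2) :
    (1 - 2 * q) * (1 + 2 * q / (1 - 2 * q)) = 1 := by
  have : 1 - 2 * q ≠ 0 := fun h => hq (by linarith)
  field_simp; ring

lemma Palpha_Pbeta_Palphabeta_nonneg (hq₀ : 0 ≤ q) (hq₁ : q ≤ 1) (n : ℕ) :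
    0 ≤ Palpha n q ∧ 0 ≤ Pbeta n q ∧ 0 ≤ Palphabeta n q := by
  induction n with
  | zero => simp [Palpha_zero, Pbeta_zero, Palphabeta_zero]
  | succ n ih =>
    obtain ⟨ha, hb, hc⟩ := ih
    have hx : 0 ≤ (1 - q) * Palpha n q + q * Pbeta n q := by positivity
    have hy : 0 ≤ (1 - q) * Pbeta n q + q * Palpha n q := by positivity
    exact ⟨by rw [Palpha_succ]; positivity, by rw [Pbeta_succ]; positivity,
      by rw [Palphabeta_succ]; positivity⟩

lemma Pbeta_le_Palpha (hq₀ : 0 ≤ q) (hq₁ : q ≤ 1 / 2) (n : ℕ) : Pbeta n q ≤ Palpha n q := by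
  induction n with
  | zero => simp [Palpha_zero, Pbeta_zero]
  | succ n ih =>
    have hc := (Palpha_Pbeta_Palphabeta_nonneg hq₀ (by linarith) n).2.2
    have hd := sub_nonneg.2 ih
    have hθ : 0 ≤ 1 - 2 * q := by linarith
    rw [← sub_nonneg, Palpha_sub_Pbeta_succ]
    positivity

lemma Palpha_sub_Pbeta_le_one (hq₀ : 0 ≤ q) (hq₁ : q ≤ 1 / 2) (n : ℕ) :
    Palpha n q - Pbeta n q ≤ 1 := by
  have := Palpha_add_Pbeta_add_Palphabeta q n
  have := Palpha_Pbeta_Palphabeta_nonneg hq₀ (by linarith) n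
  linarith

lemma Palphabeta_le_and_fitchBound_le (hq₀ : 0 ≤ q) (hq₁ : q ≤ 1 / 8) (n : ℕ) :
    Palphabeta n q ≤ 2 * q / (1 - 2 * q) ∧
      fitchBound (2 * q / (1 - 2 * q)) (Palphabeta n q) ≤
        (1 - 2 * q) ^ 2 * (Palpha n q - Pbeta n q) ^ 2 := by
  have hθ : 0 < 1 - 2 * q := by linarith
  have hθs := one_sub_two_mul_mul_one_add_div (q := q) (by linarith)
  set s := 2 * q / (1 - 2 * q) with hs
  have hs₀ : 0 ≤ s := by positivity
  have hs₁ : s ≤ 1 / 3 := by rw [hs, div_le_iff₀ hθ]; linarith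
  induction n with
  | zero =>
    rw [Palpha_zero, Pbeta_zero, Palphabeta_zero, fitchBound]
    refine ⟨hs₀, ?_⟩
    nlinarith
  | succ n ih =>
    obtain ⟨hcs, hinv⟩ := ih
    set c := Palphabeta n q
    set d := Palpha n q - Pbeta n q
    have hc₀ : 0 ≤ c := (Palpha_Pbeta_Palphabeta_nonneg hq₀ (by linarith) n).2.2
    have hd₀ : 0 ≤ d := sub_nonneg.2 (Pbeta_le_Palpha hq₀ (by linarith) n)
    have hd₁ : d ≤ 1 := Palpha_sub_Pbeta_le_one hq₀ (by linarith) n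
    have hD₁ : (1 - 2 * q) ^ 2 * d ^ 2 ≤ 1 := by
      rw [← mul_pow]; exact pow_le_one₀ (by positivity) (by nlinarith)
    rw [Palphabeta_succ_eq, Palpha_sub_Pbeta_succ]
    constructor
    · rw [fitchBound] at hinv; linarith
    · have := fitchBound_step s c _ hc₀ hcs hs₁ hinv hD₁
      calc fitchBound s (c ^ 2 + ((1 - c) ^ 2 - (1 - 2 * q) ^ 2 * d ^ 2) / 2)
          = ((1 - 2 * q) * (1 + s)) ^ 2 *
              fitchBound s (c ^ 2 + ((1 - c) ^ 2 - (1 - 2 * q) ^ 2 * d ^ 2) / 2) := by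
            rw [hθs]; ring
        _ ≤ (1 - 2 * q) ^ 2 * ((1 + c) ^ 2 * ((1 - 2 * q) ^ 2 * d ^ 2)) := by
            rw [mul_pow, mul_assoc]; gcongr
        _ = _ := by ring

lemma sq_mul_fitchBound_self (hq : q ≠ 1 / 2) :
    (1 - 2 * q) ^ 2 * fitchBound (2 * q / (1 - 2 * q)) (2 * q / (1 - 2 * q)) =
      (1 - 8 * q) * (1 - 4 * q) := by
  have : 1 - 2 * q ≠ 0 := fun h => hq (by linarith)
  rw [fitchBound]; field_simp; ring

lemma sqrt_div_le_Palpha_sub_Pbeta (hq₀ : 0 ≤ q) (hq₁ : q ≤ 1 / 8) (n : ℕ) :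
    √((1 - 8 * q) * (1 - 4 * q)) / (1 - 2 * q) ^ 2 ≤ Palpha n q - Pbeta n q := by
  obtain ⟨hcs, hinv⟩ := Palphabeta_le_and_fitchBound_le hq₀ hq₁ n
  have hc₀ := (Palpha_Pbeta_Palphabeta_nonneg hq₀ (by linarith) n).2.2
  have hd₀ := sub_nonneg.2 (Pbeta_le_Palpha hq₀ (by linarith) n)
  have hs₁ : 2 * q / (1 - 2 * q) ≤ 1 / 3 := by rw [div_le_iff₀ (by linarith)]; linarith
  have hg : fitchBound (2 * q / (1 - 2 * q)) (2 * q / (1 - 2 * q)) ≤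
      fitchBound (2 * q / (1 - 2 * q)) (Palphabeta n q) := by
    simp only [fitchBound]; nlinarith
  rw [div_le_iff₀ (by nlinarith), Real.sqrt_le_left (by positivity),
    ← sq_mul_fitchBound_self (by linarith)]
  nlinarith [sq_nonneg (1 - 2 * q)]

lemma Palpha_sub_Pbeta_antitone (hq₀ : 0 ≤ q) (hq₁ : q ≤ 1 / 8) :
    Antitone fun n => Palpha n q - Pbeta n q := by
  refine antitone_nat_of_succ_le fun n => ?_
  have hcs := (Palphabeta_le_and_fitchBound_le hq₀ hq₁ n).1
  have hd₀ := sub_nonneg.2 (Pbeta_le_Palpha hq₀ (by linarith) n)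
  have : (1 - 2 * q) * (1 + Palphabeta n q) ≤ 1 :=
    (mul_le_mul_of_nonneg_left (by linarith) (by linarith)).trans
      (one_sub_two_mul_mul_one_add_div (by linarith)).le
  rw [Palpha_sub_Pbeta_succ]
  nlinarith

lemma sqrt_div_pos (hq : q < 1 / 8) : 0 < √((1 - 8 * q) * (1 - 4 * q)) / (1 - 2 * q) ^ 2 :=
  div_pos (Real.sqrt_pos.2 (by nlinarith)) (by nlinarith)

lemma exists_pos_tendsto_Palpha_sub_Pbeta (hq₀ : 0 ≤ q) (hq₁ : q < 1 / 8) :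
    ∃ δ > 0, Tendsto (fun n => Palpha n q - Pbeta n q) atTop (𝓝 δ) := by
  have hlow := sqrt_div_le_Palpha_sub_Pbeta hq₀ hq₁.le
  exact ⟨_, (sqrt_div_pos hq₁).trans_le (le_ciInf hlow), tendsto_atTop_ciInf
    (Palpha_sub_Pbeta_antitone hq₀ hq₁.le) ⟨_, Set.forall_mem_range.2 hlow⟩⟩

lemma tendsto_Palphabeta (hq₀ : 0 ≤ q) (hq₁ : q < 1 / 8) :
    Tendsto (fun n => Palphabeta n q) atTop (𝓝 (2 * q / (1 - 2 * q))) := by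
  obtain ⟨δ, hδ, hd⟩ := exists_pos_tendsto_Palpha_sub_Pbeta hq₀ hq₁
  have hθ : 1 - 2 * q ≠ 0 := by linarith
  have hratio : Tendsto (fun n => (Palpha (n + 1) q - Pbeta (n + 1) q) /
      ((1 - 2 * q) * (Palpha n q - Pbeta n q)) - 1) atTop
      (𝓝 (δ / ((1 - 2 * q) * δ) - 1)) :=
    ((hd.comp (tendsto_add_atTop_nat 1)).div (hd.const_mul _) (mul_ne_zero hθ hδ.ne')).sub_const 1
  have hc : ∀ n, (Palpha (n + 1) q - Pbeta (n + 1) q) /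
      ((1 - 2 * q) * (Palpha n q - Pbeta n q)) - 1 = Palphabeta n q := fun n => by
    have := (sqrt_div_pos hq₁).trans_le (sqrt_div_le_Palpha_sub_Pbeta hq₀ hq₁.le n)
    rw [Palpha_sub_Pbeta_succ]
    field_simp
    ring
  have hlim : δ / ((1 - 2 * q) * δ) - 1 = 2 * q / (1 - 2 * q) := by field_simp; ring
  rw [← hlim]
  exact hratio.congr hc

lemma tendsto_Palpha_sub_Pbeta (hq₀ : 0 ≤ q) (hq₁ : q < 1 / 8) :
    Tendsto (fun n => Palpha n q - Pbeta n q) atTop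
      (𝓝 (√((1 - 8 * q) * (1 - 4 * q)) / (1 - 2 * q) ^ 2)) := by
  obtain ⟨δ, hδ, hd⟩ := exists_pos_tendsto_Palpha_sub_Pbeta hq₀ hq₁
  have hc := tendsto_Palphabeta hq₀ hq₁
  set s := 2 * q / (1 - 2 * q)
  have hrec : Tendsto (fun n => Palphabeta n q ^ 2 + ((1 - Palphabeta n q) ^ 2 -
      (1 - 2 * q) ^ 2 * (Palpha n q - Pbeta n q) ^ 2) / 2) atTop
      (𝓝 (s ^ 2 + ((1 - s) ^ 2 - (1 - 2 * q) ^ 2 * δ ^ 2) / 2)) :=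
    (hc.pow 2).add ((((tendsto_const_nhds.sub hc).pow 2).sub ((hd.pow 2).const_mul _)).div_const 2)
  have hfix : s = s ^ 2 + ((1 - s) ^ 2 - (1 - 2 * q) ^ 2 * δ ^ 2) / 2 :=
    tendsto_nhds_unique (hc.comp (tendsto_add_atTop_nat 1))
      (hrec.congr fun n => (Palphabeta_succ_eq q n).symm)
  have hδ_sq : (1 - 8 * q) * (1 - 4 * q) = ((1 - 2 * q) ^ 2 * δ) ^ 2 := by
    rw [← sq_mul_fitchBound_self (by linarith), fitchBound]
    linear_combination (-2 * (1 - 2 * q) ^ 2) * hfix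
  have hθ : 1 - 2 * q ≠ 0 := by linarith
  rwa [hδ_sq, Real.sqrt_sq (by positivity), mul_div_cancel_left₀ _ (pow_ne_zero 2 hθ)]

end Asymptotics

/-- For every fixed `q` with `0 < q < 1/8`, `P_α(n,q)` converges,
as `n → ∞`, to `(1/2)·(1 − 2q/(1−2q) + √((1−8q)(1−4q))/(1−2q)²)`. -/
theorem stmt1 (q : ℝ) (hq0 : 0 < q) (hq1 : q < 1/8) :
    Filter.Tendsto (fun n : ℕ => Palpha n q) Filter.atTop
      (nhds ((1/2) * (1 - 2*q/(1-2*q) + Real.sqrt ((1-8*q)*(1-4*q)) / (1-2*q)^2))) := by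
  have hlim := ((tendsto_const_nhds (x := (1 : ℝ))).add
    (tendsto_Palpha_sub_Pbeta hq0.le hq1)).sub (tendsto_Palphabeta hq0.le hq1)
  convert hlim.const_mul (1 / 2) using 2 with n
  · linear_combination (1 / 2 : ℝ) * Palpha_add_Pbeta_add_Palphabeta q n
  · ring
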